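/- arXiv:2402.09963 — 3 statements merged into one kernel-verified Lean document; each statement's English description precedes it below -/
import Mathlib

section
/- Fix d, H, n ≥ 2, word embeddings e(−1), e(+1) ∈ ℝ^d, positional encodings p_1,…,p_n ∈ ℝ^d, and for each h = 1,…,H matrices K_h, Q_h ∈ ℝ^{d×d}. For x ∈ {−1,1}^n define first-layer logits a_{i,j}^(h)(x) = (K_h·(p_j + e(x_j)))ᵀ·Q_h·(p_i + e(x_i)) and attention weights â_{i,j}^(h)(x) = exp(a_{i,j}^(h)(x)) / Σ_{s=1}^n exp(a_{i,s}^(h)(x)). Then for every δ > 0, with probability at least 1 − H/n^{δ−2} over a uniformly random x ∈ {−1,1}^n, the following holds simultaneously for every i ∈ {1,…,n} and h ∈ {1,…,H}: Σ_{q=1}^n Σ_{j=1}^n |â_{i,j}^(h)(x) − â_{i,j}^(h)(x^{⊕q})| ≤ (8 + 32δ)·log n + 10. Notably, this bound does not depend on the norms of K_h and Q_h. -/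
open scoped BigOperators
open Matrix

noncomputable section

namespace SensTF

/-- Flip the `q`-th bit of `x`. -/
def flip {n : ℕ} (x : Fin n → Bool) (q : Fin n) : Fin n → Bool :=
  Function.update x q (!(x q))

/-- Euclidean norm of a vector in `ℝ^d`. -/
def enorm {d : ℕ} (v : Fin d → ℝ) : ℝ := Real.sqrt (∑ j : Fin d, (v j) ^ 2)

/-- Spectral norm (ℓ²-operator norm) of a `d × d` matrix. -/
def specNorm {d : ℕ} (M : Matrix (Fin d) (Fin d) ℝ) : ℝ :=
  ‖Matrix.toEuclideanCLM (𝕜 := ℝ) M‖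

/-- Attention logit `a_{i,u} = (K y_u)ᵀ Q y_i`. -/
def attLogit {d n : ℕ} (K Q : Matrix (Fin d) (Fin d) ℝ)
    (yp : Fin n → Fin d → ℝ) (i u : Fin n) : ℝ :=
  dotProduct (K.mulVec (yp u)) (Q.mulVec (yp i))

/-- Attention weight (softmax of the logits). -/
def attWeight {d n : ℕ} (K Q : Matrix (Fin d) (Fin d) ℝ)
    (yp : Fin n → Fin d → ℝ) (i u : Fin n) : ℝ :=
  Real.exp (attLogit K Q yp i u) / ∑ s : Fin n, Real.exp (attLogit K Q yp i s)

end SensTF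

open SensTF

/-!
Fix a head and a query position `i`, and condition on the bit `x i`: key `s` then carries the
positive weight `g s (x s)`. Flipping `x q` for `q ≠ i` changes only the `q`-th weight, so the
`ℓ¹` change of the softmax is `2 |â_q(x) - â_q(x^{⊕q})|`; the terms `â_q(x)` sum to at most `1`.
To bound `â_q(x^{⊕q})`, rank the keys by their peak weight `max_c g s c`. If at least an eighth
of the keys ranked ahead of `q` carry their peak bit, each of them outweighs `g q (!x q)`, so
`â_q(x^{⊕q}) ≤ 8 / rank q`, and the harmonic sum gives `O(log n)`. By a Chernoff bound this
balance fails at a key of rank `k` for at most a fraction `e^{-k/4}` of the inputs; keys of rank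
below `t ≈ 4 (δ - 1) log n` are bounded by `1` instead, and a union bound over the keys, the query
position, its bit and the heads leaves a failure probability of at most `H n^{2-δ}`.
-/

open Finset Real

namespace SensTF

section Softmax

variable {ι : Type*} [Fintype ι]

lemma sum_abs_div_sum_sub_div_sum_le_two {w w' : ι → ℝ} (hw : ∀ s, 0 ≤ w s)
    (hw' : ∀ s, 0 ≤ w' s) :
    ∑ j, |w j / ∑ s, w s - w' j / ∑ s, w' s| ≤ 2 :=
  calc ∑ j, |w j / ∑ s, w s - w' j / ∑ s, w' s|
      ≤ ∑ j, (w j / ∑ s, w s + w' j / ∑ s, w' s) := by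
        gcongr with j
        have h : 0 ≤ w j / ∑ s, w s := div_nonneg (hw j) (sum_nonneg fun s _ => hw s)
        have h' : 0 ≤ w' j / ∑ s, w' s := div_nonneg (hw' j) (sum_nonneg fun s _ => hw' s)
        exact (abs_sub _ _).trans (by rw [abs_of_nonneg h, abs_of_nonneg h'])
    _ = (∑ s, w s) / ∑ s, w s + (∑ s, w' s) / ∑ s, w' s := by
        rw [sum_add_distrib, sum_div, sum_div]
    _ ≤ 2 := by linarith [div_self_le_one (∑ s, w s), div_self_le_one (∑ s, w' s)]

lemma sum_abs_div_sum_sub_div_sum_of_eq_off [DecidableEq ι] {w w' : ι → ℝ}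
    (hw : ∀ s, 0 < w s) (hw' : ∀ s, 0 < w' s) {q : ι} (heq : ∀ s ≠ q, w' s = w s) :
    ∑ j, |w j / ∑ s, w s - w' j / ∑ s, w' s| = 2 * |w q / ∑ s, w s - w' q / ∑ s, w' s| := by
  set W := ∑ s, w s
  set W' := ∑ s, w' s
  set A := ∑ j ∈ univ.erase q, w j
  have hW : 0 < W := sum_pos (fun s _ => hw s) ⟨q, mem_univ q⟩
  have hW' : 0 < W' := sum_pos (fun s _ => hw' s) ⟨q, mem_univ q⟩
  have hA : 0 ≤ A := sum_nonneg fun s _ => (hw s).le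
  have hAW : A + w q = W := sum_erase_add _ _ (mem_univ q)
  have hAW' : A + w' q = W' := by
    have hA' : ∑ j ∈ univ.erase q, w' j = A := sum_congr rfl fun s hs => heq s (ne_of_mem_erase hs)
    rw [← hA']
    exact sum_erase_add _ _ (mem_univ q)
  have hrest : ∑ j ∈ univ.erase q, |w j / W - w' j / W'| = |w q / W - w' q / W'| := by
    calc ∑ j ∈ univ.erase q, |w j / W - w' j / W'|
        = ∑ j ∈ univ.erase q, w j * |1 / W - 1 / W'| := by
          refine sum_congr rfl fun j hj => ?_
          rw [heq j (ne_of_mem_erase hj), ← abs_of_pos (hw j), ← abs_mul, abs_of_pos (hw j)]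
          ring_nf
      _ = |A * (1 / W - 1 / W')| := by rw [← sum_mul, abs_mul, abs_of_nonneg hA]
      _ = |w q / W - w' q / W'| := by
          rw [abs_sub_comm]
          congr 1
          field_simp
          linear_combination W' * hAW - W * hAW'
  rw [← sum_erase_add _ _ (mem_univ q), hrest]
  ring

lemma div_sum_le_inv_card {w : ι → ℝ} (hw : ∀ s, 0 ≤ w s) {a : ℝ} (ha : 0 < a)
    {S : Finset ι} (hS : S.Nonempty) (hle : ∀ s ∈ S, a ≤ w s) :
    a / ∑ s, w s ≤ 1 / #S := by
  have hcard : (#S : ℝ) * a ≤ ∑ s, w s :=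
    calc (#S : ℝ) * a ≤ ∑ s ∈ S, w s := by simpa using card_nsmul_le_sum S w a hle
      _ ≤ ∑ s, w s := sum_le_sum_of_subset_of_nonneg (subset_univ S) fun s _ _ => hw s
  have hpos : (0 : ℝ) < #S * a := mul_pos (by exact_mod_cast hS.card_pos) ha
  calc a / ∑ s, w s ≤ a / (#S * a) := div_le_div_of_nonneg_left ha.le hpos hcard
    _ = 1 / #S := by field_simp

end Softmax

lemma sum_range_ite_one_eight_div_le (n t : ℕ) :
    ∑ k ∈ range n, (if k < t then (1 : ℝ) else 8 / k) ≤ t + 8 * (1 + log n) := by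
  have hsplit : ∀ k ∈ range n, (if k < t then (1 : ℝ) else 8 / k)
      ≤ (if k < t then 1 else 0) + 8 * (k : ℝ)⁻¹ := by
    intro k _
    split_ifs <;> simp [div_eq_mul_inv]
  have hfew : ∑ k ∈ range n, (if k < t then (1 : ℝ) else 0) ≤ t := by
    rw [sum_boole]
    exact_mod_cast (card_le_card fun k hk => mem_range.mpr (mem_filter.mp hk).2).trans
      (card_range t).le
  have hharm : ∑ k ∈ range n, (k : ℝ)⁻¹ ≤ 1 + log n := by
    calc ∑ k ∈ range n, (k : ℝ)⁻¹ ≤ ∑ k ∈ range (n + 1), (k : ℝ)⁻¹ :=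
          sum_le_sum_of_subset_of_nonneg (range_subset_range.mpr n.le_succ) fun _ _ _ => by
            positivity
      _ = harmonic n := by simp [sum_range_succ', harmonic]
      _ ≤ 1 + log n := harmonic_le_one_add_log n
  calc ∑ k ∈ range n, (if k < t then (1 : ℝ) else 8 / k)
      ≤ ∑ k ∈ range n, ((if k < t then 1 else 0) + 8 * (k : ℝ)⁻¹) := sum_le_sum hsplit
    _ ≤ t + 8 * (1 + log n) := by rw [sum_add_distrib, ← mul_sum]; linarith

lemma sum_Ico_exp_neg_div_four_le (t m : ℕ) :
    ∑ k ∈ Ico t m, exp (-(k : ℝ) / 4) ≤ 5 * exp (-(t : ℝ) / 4) := by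
  have hpow : ∀ k : ℕ, exp (-(k : ℝ) / 4) = exp (-1 / 4) ^ k := fun k => by
    rw [← exp_nat_mul]; ring_nf
  have hr : exp (-1 / 4 : ℝ) ≤ 4 / 5 := by
    rw [show (-1 / 4 : ℝ) = -(1 / 4) by norm_num, exp_neg, inv_le_comm₀ (exp_pos _) (by norm_num)]
    linarith [add_one_le_exp (1 / 4 : ℝ)]
  simp_rw [hpow]
  calc ∑ k ∈ Ico t m, exp (-1 / 4 : ℝ) ^ k ≤ exp (-1 / 4 : ℝ) ^ t / (1 - exp (-1 / 4)) :=
        geom_sum_Ico_le_of_lt_one (exp_pos _).le (by linarith)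
    _ ≤ 5 * exp (-1 / 4 : ℝ) ^ t := by
        rw [div_le_iff₀ (by linarith)]
        nlinarith [pow_nonneg (exp_pos (-1 / 4 : ℝ)).le t]

section Chernoff

lemma pow_le_exp_neg_div_four (k : ℕ) :
    ((13 / 10 : ℝ) * (1 + (10 / 13) ^ 8) / 2) ^ k ≤ exp (-(k : ℝ) / 4) := by
  have hbase : (13 / 10 : ℝ) * (1 + (10 / 13) ^ 8) / 2 ≤ exp (-1 / 4) := by
    rw [show (-1 / 4 : ℝ) = -(1 / 4) by norm_num, exp_neg, le_inv_comm₀ (by norm_num) (exp_pos _)]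
    refine (exp_bound_div_one_sub_of_interval (by norm_num) (by norm_num)).trans ?_
    norm_num
  calc ((13 / 10 : ℝ) * (1 + (10 / 13) ^ 8) / 2) ^ k ≤ exp (-1 / 4) ^ k :=
        pow_le_pow_left₀ (by norm_num) hbase k
    _ = exp (-(k : ℝ) / 4) := by rw [← exp_nat_mul]; ring_nf

variable {ι : Type*} [Fintype ι] [DecidableEq ι]

/- Exponential moment method: every agreement with `β` on `P` is weighted by `(10/13)^8`,
and the tilt `(13/10)^#P` makes this weight at least `1` on the inputs counted. -/
lemma card_filter_eight_mul_card_agree_lt_le (P : Finset ι) (β : ι → Bool) :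
    (#{x : ι → Bool | 8 * #{s ∈ P | x s = β s} < #P} : ℝ)
      ≤ exp (-(#P : ℝ) / 4) * 2 ^ Fintype.card ι := by
  set a : ℝ := (10 / 13) ^ 8 with ha
  set weight : ι → Bool → ℝ := fun s c => if s ∈ P ∧ c = β s then a else 1
  have hweight : ∀ x : ι → Bool, ∏ s, weight s (x s) = a ^ #{s ∈ P | x s = β s} := by
    intro x
    rw [prod_ite, prod_const, prod_const_one, mul_one]
    congr 2
    ext s
    simp
  have hsum : ∑ x : ι → Bool, ∏ s, weight s (x s)
      = 2 ^ Fintype.card ι * ((1 + a) / 2) ^ #P := by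
    have hs : ∀ s, ∑ c, weight s c = 2 * (if s ∈ P then (1 + a) / 2 else 1) := by
      intro s
      by_cases hs : s ∈ P <;> cases hb : β s <;> simp [weight, hs, hb] <;> ring
    rw [← Fintype.prod_sum, Fintype.prod_congr _ _ hs, prod_mul_distrib, prod_const, card_univ,
      prod_ite_mem, prod_const, univ_inter]
  have hbad : ∀ x ∈ ({x : ι → Bool | 8 * #{s ∈ P | x s = β s} < #P} : Finset _),
      (1 : ℝ) ≤ (13 / 10) ^ #P * ∏ s, weight s (x s) := by
    intro x hx
    have hfew : 8 * #{s ∈ P | x s = β s} ≤ #P := (mem_filter.mp hx).2.le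
    calc (1 : ℝ) = (13 / 10) ^ #P * (10 / 13) ^ #P := by rw [← mul_pow]; norm_num
      _ ≤ (13 / 10) ^ #P * a ^ #{s ∈ P | x s = β s} := by
          rw [ha, ← pow_mul]
          exact mul_le_mul_of_nonneg_left (pow_le_pow_of_le_one (by norm_num) (by norm_num) hfew)
            (by positivity)
      _ = (13 / 10) ^ #P * ∏ s, weight s (x s) := by rw [hweight]
  calc (#{x : ι → Bool | 8 * #{s ∈ P | x s = β s} < #P} : ℝ)
      ≤ ∑ x ∈ {x : ι → Bool | 8 * #{s ∈ P | x s = β s} < #P},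
          (13 / 10 : ℝ) ^ #P * ∏ s, weight s (x s) := by
        rw [← nsmul_one, ← sum_const]; exact_mod_cast sum_le_sum hbad
    _ ≤ ∑ x : ι → Bool, (13 / 10 : ℝ) ^ #P * ∏ s, weight s (x s) :=
        sum_le_sum_of_subset_of_nonneg (subset_univ _) fun x _ _ => by rw [hweight]; positivity
    _ = ((13 / 10 : ℝ) * (1 + a) / 2) ^ #P * 2 ^ Fintype.card ι := by
        rw [← mul_sum, hsum, mul_div_assoc, mul_pow]; ring
    _ ≤ exp (-(#P : ℝ) / 4) * 2 ^ Fintype.card ι := by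
        rw [ha]
        exact mul_le_mul_of_nonneg_right (pow_le_exp_neg_div_four #P) (by positivity)

end Chernoff

section Ranking

variable {ι : Type*} (g : ι → Bool → ℝ)

def peak (s : ι) : ℝ := max (g s true) (g s false)

def peakBit (s : ι) : Bool := decide (g s false ≤ g s true)

def rankKey (s : ι) : ℝᵒᵈ ×ₗ ι := toLex (OrderDual.toDual (peak g s), s)

variable {g}

lemma le_peak (s : ι) (c : Bool) : g s c ≤ peak g s := by
  cases c
  · exact le_max_right _ _
  · exact le_max_left _ _

lemma apply_peakBit (s : ι) : g s (peakBit g s) = peak g s := by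
  by_cases h : g s false ≤ g s true
  · simp [peakBit, peak, h]
  · simp [peakBit, peak, h, (not_le.mp h).le]

lemma rankKey_injective : Function.Injective (rankKey g) :=
  fun _ _ h => congrArg Prod.snd (toLex.injective h)

variable [Fintype ι] [LinearOrder ι] (g)

def ahead (q : ι) : Finset ι := {s | rankKey g s < rankKey g q}

def rank (q : ι) : ℕ := #(ahead g q)

def IsBalanced (t : ℕ) (x : ι → Bool) : Prop :=
  ∀ q, t ≤ rank g q → rank g q ≤ 8 * #{s ∈ ahead g q | x s = peakBit g s}

variable {g}

lemma peak_le_of_mem_ahead {s q : ι} (hs : s ∈ ahead g q) : peak g q ≤ peak g s := by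
  simp only [ahead, rankKey, mem_filter, mem_univ, true_and, Prod.Lex.toLex_lt_toLex] at hs
  rcases hs with h | ⟨h, -⟩
  · exact h.le
  · exact (OrderDual.toDual_inj.mp h).ge

lemma notMem_ahead_self (q : ι) : q ∉ ahead g q := by
  simp [ahead]

lemma rank_lt_card (q : ι) : rank g q < Fintype.card ι :=
  card_lt_univ_of_notMem (notMem_ahead_self q)

lemma rank_lt_rank {q q' : ι} (h : rankKey g q < rankKey g q') : rank g q < rank g q' := by
  refine card_lt_card ⟨fun s hs => ?_, fun hsub => notMem_ahead_self q (hsub ?_)⟩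
  · simp only [ahead, mem_filter, mem_univ, true_and] at hs ⊢
    exact hs.trans h
  · simpa [ahead] using h

lemma rank_injective : Function.Injective (rank g) := by
  intro q q' h
  by_contra hne
  rcases lt_or_gt_of_ne (rankKey_injective.ne hne) with hlt | hlt
  · exact (rank_lt_rank hlt).ne h
  · exact (rank_lt_rank hlt).ne' h

lemma div_sum_update_not_le (hg : ∀ s c, 0 < g s c) {t : ℕ} (ht : 1 ≤ t) {x : ι → Bool}
    (hx : IsBalanced g t x) (q : ι) :
    g q (!x q) / ∑ s, g s (Function.update x q (!x q) s)
      ≤ if rank g q < t then (1 : ℝ) else 8 / rank g q := by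
  set y := Function.update x q (!x q)
  have hy : ∀ s, 0 ≤ g s (y s) := fun s => (hg s _).le
  split_ifs with hrank
  · have hq : g q (!x q) ≤ ∑ s, g s (y s) := by
      simpa [y] using single_le_sum (fun s _ => hy s) (mem_univ q)
    exact div_le_one_of_le₀ hq (sum_nonneg fun s _ => hy s)
  · set S := {s ∈ ahead g q | x s = peakBit g s}
    have hS : rank g q ≤ 8 * #S := hx q (not_lt.mp hrank)
    have hSpos : 0 < #S := by omega
    have hle : ∀ s ∈ S, g q (!x q) ≤ g s (y s) := by
      intro s hs
      obtain ⟨hs, hbit⟩ := mem_filter.mp hs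
      have hsq : s ≠ q := fun h => notMem_ahead_self q (h ▸ hs)
      rw [show y s = peakBit g s by simp [y, hsq, hbit], apply_peakBit (g := g)]
      exact (le_peak q _).trans (peak_le_of_mem_ahead hs)
    calc g q (!x q) / ∑ s, g s (y s) ≤ 1 / #S :=
          div_sum_le_inv_card hy (hg q _) (card_pos.mp hSpos) hle
      _ ≤ 8 / rank g q := by
          have hrank : (0 : ℝ) < rank g q := by exact_mod_cast (by omega : 0 < rank g q)
          rw [div_le_div_iff₀ (by exact_mod_cast hSpos) hrank]
          exact_mod_cast (by omega : 1 * rank g q ≤ 8 * #S)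

lemma sum_div_sum_update_not_le (hg : ∀ s c, 0 < g s c) {t : ℕ} (ht : 1 ≤ t) {x : ι → Bool}
    (hx : IsBalanced g t x) :
    ∑ q, g q (!x q) / ∑ s, g s (Function.update x q (!x q) s)
      ≤ t + 8 * (1 + log (Fintype.card ι)) :=
  calc _ ≤ ∑ q, (if rank g q < t then (1 : ℝ) else 8 / rank g q) :=
        sum_le_sum fun q _ => div_sum_update_not_le hg ht hx q
    _ = ∑ k ∈ univ.image (rank g), (if k < t then (1 : ℝ) else 8 / k) := by
        rw [sum_image fun _ _ _ _ h => rank_injective h]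
    _ ≤ ∑ k ∈ range (Fintype.card ι), (if k < t then (1 : ℝ) else 8 / k) := by
        refine sum_le_sum_of_subset_of_nonneg (fun k hk => ?_) fun k _ _ => by positivity
        obtain ⟨q, -, rfl⟩ := mem_image.mp hk
        exact mem_range.mpr (rank_lt_card q)
    _ ≤ t + 8 * (1 + log (Fintype.card ι)) := sum_range_ite_one_eight_div_le _ _

open scoped Classical in
lemma card_not_isBalanced_le (t : ℕ) :
    (#{x : ι → Bool | ¬ IsBalanced g t x} : ℝ) ≤ 5 * exp (-(t : ℝ) / 4) * 2 ^ Fintype.card ι := by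
  set T : Finset ι := {q | t ≤ rank g q}
  set B : ι → Finset (ι → Bool) :=
    fun q => {x | 8 * #{s ∈ ahead g q | x s = peakBit g s} < #(ahead g q)}
  have hsub : ({x | ¬ IsBalanced g t x} : Finset (ι → Bool)) ⊆ T.biUnion B := by
    intro x hx
    simp only [IsBalanced, mem_filter, mem_univ, true_and, not_forall, not_le] at hx
    obtain ⟨q, hq, hlt⟩ := hx
    exact mem_biUnion.mpr ⟨q, by simpa [T] using hq, by simpa [B, rank] using hlt⟩
  calc (#{x : ι → Bool | ¬ IsBalanced g t x} : ℝ) ≤ ∑ q ∈ T, (#(B q) : ℝ) := by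
        exact_mod_cast (card_le_card hsub).trans card_biUnion_le
    _ ≤ ∑ q ∈ T, exp (-(rank g q : ℝ) / 4) * 2 ^ Fintype.card ι :=
        sum_le_sum fun q _ => card_filter_eight_mul_card_agree_lt_le _ _
    _ = (∑ k ∈ T.image (rank g), exp (-(k : ℝ) / 4)) * 2 ^ Fintype.card ι := by
        rw [sum_image fun _ _ _ _ h => rank_injective h, sum_mul]
    _ ≤ (∑ k ∈ Ico t (Fintype.card ι), exp (-(k : ℝ) / 4)) * 2 ^ Fintype.card ι := by
        gcongr
        intro k hk
        obtain ⟨q, hq, rfl⟩ := mem_image.mp hk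
        exact mem_Ico.mpr ⟨(mem_filter.mp hq).2, rank_lt_card q⟩
    _ ≤ 5 * exp (-(t : ℝ) / 4) * 2 ^ Fintype.card ι := by
        gcongr
        exact sum_Ico_exp_neg_div_four_le _ _

end Ranking

section Attention

variable {ι : Type*} [Fintype ι]

/- `G b s c` is the unnormalized attention weight of key `s` carrying bit `c`, for a query
carrying bit `b`. -/
def bitAttn (G : Bool → ι → Bool → ℝ) (i : ι) (z : ι → Bool) (j : ι) : ℝ :=
  G (z i) j (z j) / ∑ s, G (z i) s (z s)

variable [LinearOrder ι]

-- Flipping the query's own bit changes every weight, so that term is only bounded by `2`.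
lemma sum_abs_bitAttn_sub_update_le {G : Bool → ι → Bool → ℝ} (hG : ∀ b s c, 0 < G b s c)
    (i : ι) (x : ι → Bool) (q : ι) :
    ∑ j, |bitAttn G i x j - bitAttn G i (Function.update x q (!x q)) j|
      ≤ (if q = i then 2 else 0) + 2 * bitAttn G i x q
        + 2 * (G (x i) q (!x q) / ∑ s, G (x i) s (Function.update x q (!x q) s)) := by
  set y := Function.update x q (!x q)
  have hx : 0 ≤ bitAttn G i x q := div_nonneg (hG _ _ _).le (sum_nonneg fun s _ => (hG _ _ _).le)
  have hy : 0 ≤ G (x i) q (!x q) / ∑ s, G (x i) s (y s) :=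
    div_nonneg (hG _ _ _).le (sum_nonneg fun s _ => (hG _ _ _).le)
  by_cases hqi : q = i
  · subst hqi
    have h2 := sum_abs_div_sum_sub_div_sum_le_two (fun s => (hG (x q) s (x s)).le)
      (fun s => (hG (y q) s (y s)).le)
    rw [if_pos rfl]
    exact h2.trans (by linarith)
  · have hyi : y i = x i := Function.update_of_ne (Ne.symm hqi) _ _
    have hyq : y q = !x q := Function.update_self _ _ _
    have heq : ∀ s ≠ q, G (x i) s (y s) = G (x i) s (x s) := fun s hs => by
      rw [show y s = x s from Function.update_of_ne hs _ _]
    have h2 := sum_abs_div_sum_sub_div_sum_of_eq_off (fun s => hG (x i) s (x s))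
      (fun s => hG (x i) s (y s)) heq
    simp only [bitAttn, hyi, hqi, if_false, zero_add] at h2 hx ⊢
    rw [h2, hyq, ← mul_add]
    gcongr
    exact abs_sub_le_iff.mpr ⟨by linarith, by linarith⟩

lemma sum_sum_abs_bitAttn_sub_update_le {G : Bool → ι → Bool → ℝ} (hG : ∀ b s c, 0 < G b s c)
    {t : ℕ} (ht : 1 ≤ t) (i : ι) {x : ι → Bool} (hx : IsBalanced (G (x i)) t x) :
    ∑ q, ∑ j, |bitAttn G i x j - bitAttn G i (Function.update x q (!x q)) j|
      ≤ 4 + 2 * (t + 8 * (1 + log (Fintype.card ι))) := by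
  have hattn : ∑ q, bitAttn G i x q ≤ 1 := by
    simp only [bitAttn]
    rw [← sum_div]
    exact div_self_le_one _
  have hflip := sum_div_sum_update_not_le (fun s c => hG (x i) s c) ht hx
  calc _ ≤ ∑ q, ((if q = i then 2 else 0) + 2 * bitAttn G i x q
          + 2 * (G (x i) q (!x q) / ∑ s, G (x i) s (Function.update x q (!x q) s))) :=
        sum_le_sum fun q _ => sum_abs_bitAttn_sub_update_le hG i x q
    _ = 2 + 2 * ∑ q, bitAttn G i x q
          + 2 * ∑ q, G (x i) q (!x q) / ∑ s, G (x i) s (Function.update x q (!x q) s) := by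
        rw [sum_add_distrib, sum_add_distrib, sum_ite_eq', if_pos (mem_univ i), ← mul_sum,
          ← mul_sum]
    _ ≤ 4 + 2 * (t + 8 * (1 + log (Fintype.card ι))) := by linarith

open scoped Classical in
lemma card_filter_forall_sum_sum_abs_bitAttn_sub_update_le {τ : Type*} [Fintype τ]
    {G : τ → ι → Bool → ι → Bool → ℝ} (hG : ∀ h i b s c, 0 < G h i b s c) {t : ℕ}
    (ht : 1 ≤ t) :
    (1 - Fintype.card ι * Fintype.card τ * (10 * exp (-(t : ℝ) / 4))) * 2 ^ Fintype.card ι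
      ≤ #{x : ι → Bool | ∀ i h, ∑ q, ∑ j,
          |bitAttn (G h i) i x j - bitAttn (G h i) i (Function.update x q (!x q)) j|
            ≤ 4 + 2 * (t + 8 * (1 + log (Fintype.card ι)))} := by
  set P : (ι → Bool) → Prop := fun x => ∀ i h, ∑ q, ∑ j,
    |bitAttn (G h i) i x j - bitAttn (G h i) i (Function.update x q (!x q)) j|
      ≤ 4 + 2 * (t + 8 * (1 + log (Fintype.card ι)))
  have hsub : ({x | ¬ P x} : Finset (ι → Bool))
      ⊆ (univ : Finset (ι × τ × Bool)).biUnion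
          fun a => {x | ¬ IsBalanced (G a.2.1 a.1 a.2.2) t x} := by
    intro x hx
    simp only [P, mem_filter, mem_univ, true_and, not_forall] at hx
    obtain ⟨i, h, hih⟩ := hx
    exact mem_biUnion.mpr ⟨(i, h, x i), mem_univ _, mem_filter.mpr ⟨mem_univ _,
      fun hbal => hih (sum_sum_abs_bitAttn_sub_update_le (hG h i) ht i hbal)⟩⟩
  have hbad : (#({x | ¬ P x} : Finset (ι → Bool)) : ℝ)
      ≤ Fintype.card ι * Fintype.card τ * (10 * exp (-(t : ℝ) / 4)) * 2 ^ Fintype.card ι :=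
    calc (#({x | ¬ P x} : Finset (ι → Bool)) : ℝ)
        ≤ ∑ a : ι × τ × Bool, (#{x | ¬ IsBalanced (G a.2.1 a.1 a.2.2) t x} : ℝ) := by
          exact_mod_cast (card_le_card hsub).trans card_biUnion_le
      _ ≤ ∑ _a : ι × τ × Bool, 5 * exp (-(t : ℝ) / 4) * 2 ^ Fintype.card ι :=
          sum_le_sum fun a _ => card_not_isBalanced_le t
      _ = _ := by simp only [sum_const, card_univ, Fintype.card_prod, Fintype.card_bool]; ring
  have hsplit : (#({x | P x} : Finset (ι → Bool)) : ℝ) + #({x | ¬ P x} : Finset (ι → Bool))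
      = 2 ^ Fintype.card ι := by
    exact_mod_cast (card_filter_add_card_filter_not P).trans (by simp)
  linarith

end Attention

lemma exists_threshold {n : ℕ} (hn : 2 ≤ n) {δ : ℝ} (hδ : 2 < δ) :
    ∃ t : ℕ, 1 ≤ t ∧ 4 + 2 * (t + 8 * (1 + log n)) ≤ (8 + 32 * δ) * log n + 10 ∧
      n * (10 * exp (-(t : ℝ) / 4)) ≤ (n : ℝ) ^ (2 - δ) := by
  have hn0 : (0 : ℝ) < n := by positivity
  have hlogn : log 2 ≤ log n := log_le_log (by norm_num) (by exact_mod_cast hn)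
  have hlog2 := log_two_gt_d9
  have hlog10 : 3 * log 10 ≤ 10 * log 2 := by
    have h := log_le_log (by norm_num) (by norm_num : (10 : ℝ) ^ 3 ≤ 2 ^ 10)
    rw [log_pow, log_pow] at h
    exact_mod_cast h
  set A := 4 * ((δ - 1) * log n + log 10)
  have hA : 0 < A := by
    have : 0 < (δ - 1) * log n := mul_pos (by linarith) (by linarith)
    have : 0 < log 10 := log_pos (by norm_num)
    positivity
  refine ⟨⌈A⌉₊, Nat.one_le_iff_ne_zero.mpr (Nat.ceil_pos.mpr hA).ne', ?_, ?_⟩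
  · have hceil : (⌈A⌉₊ : ℝ) < A + 1 := Nat.ceil_lt_add_one hA.le
    have : 2 * log 2 ≤ δ * log n := mul_le_mul hδ.le hlogn (by linarith) (by linarith)
    linarith
  · have hceil : A ≤ ⌈A⌉₊ := Nat.le_ceil A
    calc (n : ℝ) * (10 * exp (-(⌈A⌉₊ : ℝ) / 4))
        ≤ exp (log n) * (exp (log 10) * exp (-((δ - 1) * log n + log 10))) := by
          rw [exp_log hn0, exp_log (by norm_num)]
          gcongr
          linarith
      _ = (n : ℝ) ^ (2 - δ) := by
          rw [← exp_add, ← exp_add, rpow_def_of_pos hn0]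
          ring_nf

end SensTF

theorem statement10_general {d H n : ℕ} (hn : 2 ≤ n)
    (e : Bool → Fin d → ℝ) (p : Fin n → Fin d → ℝ)
    (K Q : Fin H → Matrix (Fin d) (Fin d) ℝ)
    (δ : ℝ) :
    ((1 : ℝ) - H / (n : ℝ) ^ (δ - 2)) * 2 ^ n ≤
      Nat.card {x : Fin n → Bool //
        ∀ (i : Fin n) (h : Fin H),
          ∑ q : Fin n, ∑ j : Fin n,
            |attWeight (K h) (Q h) (fun w => p w + e (x w)) i j -
              attWeight (K h) (Q h) (fun w => p w + e (flip x q w)) i j| ≤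
            (8 + 32 * δ) * Real.log n + 10} := by
  classical
  rcases Nat.eq_zero_or_pos H with rfl | hH
  · simp [Nat.card_eq_fintype_card]
  rcases le_or_gt δ 2 with hδ | hδ
  · have hHn : 1 ≤ (H : ℝ) / (n : ℝ) ^ (δ - 2) := by
      rw [le_div_iff₀ (by positivity), one_mul]
      exact (rpow_le_one_of_one_le_of_nonpos (by exact_mod_cast (by omega : 1 ≤ n))
        (by linarith)).trans (by exact_mod_cast hH)
    exact (mul_nonpos_of_nonpos_of_nonneg (by linarith) (by positivity)).trans (Nat.cast_nonneg _)
  obtain ⟨t, ht, hB, hprob⟩ := exists_threshold hn hδ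
  have key := card_filter_forall_sum_sum_abs_bitAttn_sub_update_le
    (G := fun (h : Fin H) (i : Fin n) b s c => exp ((K h *ᵥ (p s + e c)) ⬝ᵥ (Q h *ᵥ (p i + e b))))
    (fun _ _ _ _ _ => exp_pos _) ht
  simp only [Fintype.card_fin] at key
  rw [Nat.card_eq_fintype_card, Fintype.card_subtype]
  have hunion : (n : ℝ) * H * (10 * exp (-(t : ℝ) / 4)) ≤ H / (n : ℝ) ^ (δ - 2) := by
    rw [div_eq_mul_inv (H : ℝ), ← rpow_neg (by positivity), neg_sub, mul_right_comm,
      mul_comm _ (H : ℝ)]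
    exact mul_le_mul_of_nonneg_left hprob (Nat.cast_nonneg H)
  calc ((1 : ℝ) - H / (n : ℝ) ^ (δ - 2)) * 2 ^ n
      ≤ (1 - n * H * (10 * exp (-(t : ℝ) / 4))) * 2 ^ n :=
        mul_le_mul_of_nonneg_right (by linarith) (by positivity)
    _ ≤ _ := key
    _ ≤ _ := by
        refine Nat.cast_le.mpr (card_le_card (monotone_filter_right _ fun x _ hx i h => ?_))
        exact (hx i h).trans hB

/-- Lemma: first-layer attention weights have low total influence.
For first-layer attention over inputs `x ∈ {±1}ⁿ` (`n ≥ 2`), for every `δ > 0`, with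
probability at least `1 − H/n^{δ−2}` over a uniformly random `x`, simultaneously for all
positions `i` and heads `h`:
`∑_q ∑_j |â_{i,j}^{(h)}(x) − â_{i,j}^{(h)}(x^{⊕q})| ≤ (8+32δ)·log n + 10`,
independently of the norms of `K_h` and `Q_h`. -/
theorem statement10 {d H n : ℕ} (hn : 2 ≤ n)
    (e : Bool → Fin d → ℝ) (p : Fin n → Fin d → ℝ)
    (K Q : Fin H → Matrix (Fin d) (Fin d) ℝ)
    (δ : ℝ) (hδ : 0 < δ) :
    ((1 : ℝ) - H / (n : ℝ) ^ (δ - 2)) * 2 ^ n ≤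
      Nat.card {x : Fin n → Bool //
        ∀ (i : Fin n) (h : Fin H),
          ∑ q : Fin n, ∑ j : Fin n,
            |attWeight (K h) (Q h) (fun w => p w + e (x w)) i j -
              attWeight (K h) (Q h) (fun w => p w + e (flip x q w)) i j| ≤
            (8 + 32 * δ) * Real.log n + 10} :=
  statement10_general hn e p K Q δ
end
end

section
/- Fix d, n ≥ 1, matrices K, Q ∈ ℝ^{d×d}, and maps y_1,…,y_n : {−1,1}^n → ℝ^d with ‖y_i(x)‖₂ ≤ √d for all i and x. Let C_A = d·‖KᵀQ‖₂ (spectral norm), define logits a_{i,u}(x) = (K·y_u(x))ᵀ·Q·y_i(x) and softmax weights â_{i,u}(x) = exp(a_{i,u}(x)) / Σ_{s=1}^n exp(a_{i,s}(x)). Then for every x ∈ {−1,1}^n and all i, q ∈ {1,…,n}: Σ_{u=1}^n |â_{i,u}(x) − â_{i,u}(x^{⊕q})| ≤ 2·exp(4·C_A)·( ‖y_i(x) − y_i(x^{⊕q})‖₂ + (1/n)·Σ_{j=1}^n ‖y_j(x) − y_j(x^{⊕q})‖₂ ). -/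
open scoped BigOperators
open Matrix

noncomputable section

/-! The logits are the bilinear form of `M = Kᵀ Q` evaluated on token vectors of norm `≤ √d`,
so they lie in `[-C_A, C_A]`, and flipping bit `q` moves the logit `a_{i,u}` by at most
`‖M‖ √d (Δ_i + Δ_u)`, where `Δ_j = ‖y_j(x) - y_j(x^{⊕q})‖`. On `[-C_A, C_A]` the exponential is
`e^{C_A}`-Lipschitz and every softmax denominator is at least `n e^{-C_A}`, which makes softmax
`2 e^{2 C_A} / n`-Lipschitz from `ℓ¹` to `ℓ¹`. The remaining factor `‖M‖ √d ≤ C_A` is absorbed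
into a second `e^{2 C_A}`. -/

namespace SensTF

lemma enorm_eq_norm_toLp {d : ℕ} (v : Fin d → ℝ) : enorm v = ‖WithLp.toLp 2 v‖ := by
  simp only [enorm, EuclideanSpace.norm_eq, Real.norm_eq_abs, sq_abs]

lemma enorm_nonneg {d : ℕ} (v : Fin d → ℝ) : 0 ≤ enorm v := Real.sqrt_nonneg _

lemma specNorm_nonneg {d : ℕ} (M : Matrix (Fin d) (Fin d) ℝ) : 0 ≤ specNorm M := norm_nonneg _

lemma abs_dotProduct_mulVec_le {d : ℕ} (M : Matrix (Fin d) (Fin d) ℝ) (u v : Fin d → ℝ) :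
    |u ⬝ᵥ M *ᵥ v| ≤ specNorm M * enorm u * enorm v := by
  have h_inner : u ⬝ᵥ M *ᵥ v =
      inner ℝ (WithLp.toLp 2 u) (toEuclideanCLM (𝕜 := ℝ) M (WithLp.toLp 2 v)) := by
    simp [toEuclideanCLM_toLp, PiLp.inner_apply, dotProduct, mul_comm]
  rw [h_inner, enorm_eq_norm_toLp, enorm_eq_norm_toLp, mul_comm (specNorm M), mul_assoc]
  exact (abs_real_inner_le_norm _ _).trans
    (mul_le_mul_of_nonneg_left (ContinuousLinearMap.le_opNorm _ _) (norm_nonneg _))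

lemma attLogit_eq_dotProduct {d n : ℕ} (K Q : Matrix (Fin d) (Fin d) ℝ)
    (yp : Fin n → Fin d → ℝ) (i u : Fin n) :
    attLogit K Q yp i u = yp u ⬝ᵥ (Kᵀ * Q) *ᵥ yp i := by
  rw [attLogit, ← mulVec_mulVec, dotProduct_mulVec (yp u), vecMul_transpose]

end SensTF

open Real Finset

lemma abs_exp_sub_exp_le {a b C : ℝ} (ha : a ≤ C) (hb : b ≤ C) :
    |exp a - exp b| ≤ exp C * |a - b| :=
  (convex_Iic C).norm_image_sub_le_of_norm_deriv_le (fun _ _ => differentiableAt_exp)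
    (fun x hx => by simpa [abs_of_pos (exp_pos x)] using exp_le_exp.2 hx) hb ha

lemma sum_abs_div_sum_sub_div_sum_le {ι : Type*} [Fintype ι] (p q : ι → ℝ) (hq : ∀ u, 0 ≤ q u)
    (hp_sum : 0 < ∑ s, p s) (hq_sum : 0 < ∑ s, q s) :
    ∑ u, |p u / ∑ s, p s - q u / ∑ s, q s| ≤ 2 * (∑ u, |p u - q u|) / ∑ s, p s := by
  set A := ∑ s, p s
  set B := ∑ s, q s
  have h_total : |B - A| ≤ ∑ u, |p u - q u| := by
    rw [abs_sub_comm, ← sum_sub_distrib]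
    exact abs_sum_le_sum_abs _ _
  have h_split : ∀ u, |p u / A - q u / B| ≤ |p u - q u| / A + q u * |B - A| / (A * B) := by
    intro u
    have : p u / A - q u / B = (p u - q u) / A + q u * (B - A) / (A * B) := by
      field_simp
      ring
    rw [this]
    refine (abs_add_le _ _).trans_eq ?_
    rw [abs_div, abs_div, abs_mul, abs_of_pos hp_sum, abs_of_pos (mul_pos hp_sum hq_sum),
      abs_of_nonneg (hq u)]
  calc ∑ u, |p u / A - q u / B|
      ≤ ∑ u, (|p u - q u| / A + q u * |B - A| / (A * B)) := sum_le_sum fun u _ => h_split u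
    _ = (∑ u, |p u - q u|) / A + |B - A| / A := by
      rw [sum_add_distrib, ← sum_div, ← sum_div, ← sum_mul]
      change _ + B * |B - A| / (A * B) = _
      field_simp
    _ ≤ 2 * (∑ u, |p u - q u|) / A := by
      rw [mul_div_assoc, two_mul]
      gcongr

lemma sum_abs_softmax_sub_le {ι : Type*} [Fintype ι] [Nonempty ι] {a b : ι → ℝ} {C : ℝ}
    (ha : ∀ u, |a u| ≤ C) (hb : ∀ u, |b u| ≤ C) :
    ∑ u, |exp (a u) / ∑ s, exp (a s) - exp (b u) / ∑ s, exp (b s)| ≤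
      2 * exp (2 * C) / Fintype.card ι * ∑ u, |a u - b u| := by
  have h_denom : Fintype.card ι * exp (-C) ≤ ∑ s, exp (a s) := by
    simpa using card_nsmul_le_sum univ _ _ fun s _ => exp_le_exp.2 (neg_le_of_abs_le (ha s))
  have h_exp : ∑ u, |exp (a u) - exp (b u)| ≤ exp C * ∑ u, |a u - b u| := by
    rw [mul_sum]
    exact sum_le_sum fun u _ => abs_exp_sub_exp_le (le_of_abs_le (ha u)) (le_of_abs_le (hb u))
  calc _ ≤ 2 * (∑ u, |exp (a u) - exp (b u)|) / ∑ s, exp (a s) :=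
        sum_abs_div_sum_sub_div_sum_le _ _ (fun u => (exp_pos _).le)
          (sum_pos (fun s _ => exp_pos _) univ_nonempty)
          (sum_pos (fun s _ => exp_pos _) univ_nonempty)
    _ ≤ 2 * (exp C * ∑ u, |a u - b u|) / (Fintype.card ι * exp (-C)) := by
        gcongr
    _ = _ := by
        rw [exp_neg, show 2 * C = C + C by ring, exp_add]
        field_simp

namespace SensTF

variable {d n : ℕ} (K Q : Matrix (Fin d) (Fin d) ℝ)

lemma abs_attLogit_le {yp : Fin n → Fin d → ℝ} {R : ℝ} (hR : ∀ w, enorm (yp w) ≤ R)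
    (i u : Fin n) :
    |attLogit K Q yp i u| ≤ specNorm (Kᵀ * Q) * R ^ 2 := by
  rw [attLogit_eq_dotProduct, sq, ← mul_assoc]
  refine (abs_dotProduct_mulVec_le _ _ _).trans ?_
  have hM := specNorm_nonneg (Kᵀ * Q)
  exact mul_le_mul (mul_le_mul_of_nonneg_left (hR u) hM) (hR i) (enorm_nonneg _)
    (mul_nonneg hM ((enorm_nonneg _).trans (hR u)))

lemma abs_attLogit_sub_le {yp yp' : Fin n → Fin d → ℝ} {R : ℝ} (hR : ∀ w, enorm (yp w) ≤ R)
    (hR' : ∀ w, enorm (yp' w) ≤ R) (i u : Fin n) :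
    |attLogit K Q yp i u - attLogit K Q yp' i u| ≤
      specNorm (Kᵀ * Q) * R * (enorm (yp i - yp' i) + enorm (yp u - yp' u)) := by
  set M := Kᵀ * Q
  have h_split : attLogit K Q yp i u - attLogit K Q yp' i u =
      yp u ⬝ᵥ M *ᵥ (yp i - yp' i) + (yp u - yp' u) ⬝ᵥ M *ᵥ yp' i := by
    rw [attLogit_eq_dotProduct, attLogit_eq_dotProduct, mulVec_sub, dotProduct_sub, sub_dotProduct]
    ring
  have := specNorm_nonneg M
  have := enorm_nonneg (yp i - yp' i)
  have := enorm_nonneg (yp u - yp' u)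
  calc |attLogit K Q yp i u - attLogit K Q yp' i u|
      ≤ specNorm M * enorm (yp u) * enorm (yp i - yp' i) +
          specNorm M * enorm (yp u - yp' u) * enorm (yp' i) := by
        rw [h_split]
        exact (abs_add_le _ _).trans
          (add_le_add (abs_dotProduct_mulVec_le _ _ _) (abs_dotProduct_mulVec_le _ _ _))
    _ ≤ specNorm M * R * enorm (yp i - yp' i) + specNorm M * enorm (yp u - yp' u) * R := by
        gcongr
        exacts [hR u, hR' i]
    _ = specNorm M * R * (enorm (yp i - yp' i) + enorm (yp u - yp' u)) := by ring

lemma sum_abs_attLogit_sub_le {yp yp' : Fin n → Fin d → ℝ} {R : ℝ} (hR : ∀ w, enorm (yp w) ≤ R)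
    (hR' : ∀ w, enorm (yp' w) ≤ R) (i : Fin n) :
    ∑ u, |attLogit K Q yp i u - attLogit K Q yp' i u| ≤
      specNorm (Kᵀ * Q) * R * (n * enorm (yp i - yp' i) + ∑ j, enorm (yp j - yp' j)) := by
  refine (sum_le_sum fun u _ => abs_attLogit_sub_le K Q hR hR' i u).trans_eq ?_
  rw [← mul_sum, sum_add_distrib, sum_const, card_univ, Fintype.card_fin, nsmul_eq_mul]

end SensTF

lemma mul_sqrt_le_exp_two_mul {s : ℝ} (hs : 0 ≤ s) (d : ℕ) : s * √d ≤ exp (2 * (d * s)) := by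
  have h_sqrt : √(d : ℝ) ≤ d := by
    rcases Nat.eq_zero_or_pos d with rfl | hd
    · simp
    · exact sqrt_le_self_iff.2 (Or.inr (Nat.one_le_cast.2 hd))
  have := add_one_le_exp (2 * (d * s))
  nlinarith [mul_le_mul_of_nonneg_left h_sqrt hs, mul_nonneg (Nat.cast_nonneg d) hs]

open SensTF

/-- Lemma: pointwise Lipschitz bound on attention at higher layers.
If `‖y_i(x)‖₂ ≤ √d` for all `i, x` and `C_A = d·‖KᵀQ‖₂`, then
`∑_u |â_{i,u}(x) − â_{i,u}(x^{⊕q})| ≤ 2·exp(4C_A)·(‖y_i(x) − y_i(x^{⊕q})‖₂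
  + (1/n)·∑_j ‖y_j(x) − y_j(x^{⊕q})‖₂)`. -/
theorem statement11 {d n : ℕ} (K Q : Matrix (Fin d) (Fin d) ℝ)
    (y : Fin n → (Fin n → Bool) → Fin d → ℝ)
    (hy : ∀ (i : Fin n) (x : Fin n → Bool), SensTF.enorm (y i x) ≤ Real.sqrt d)
    (x : Fin n → Bool) (i q : Fin n) :
    ∑ u : Fin n,
        |attWeight K Q (fun w => y w x) i u -
          attWeight K Q (fun w => y w (flip x q)) i u| ≤
      2 * Real.exp (4 * (d * specNorm (Kᵀ * Q))) *
        (SensTF.enorm (y i x - y i (flip x q)) +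
          (1 / n) * ∑ j : Fin n, SensTF.enorm (y j x - y j (flip x q))) := by
  have : Nonempty (Fin n) := ⟨i⟩
  have hn : (0 : ℝ) < n := Nat.cast_pos.2 i.pos
  set C := (d : ℝ) * specNorm (Kᵀ * Q)
  set Δ := SensTF.enorm (y i x - y i (flip x q))
  set Δsum := ∑ j, SensTF.enorm (y j x - y j (flip x q))
  have hR : ∀ x' w, SensTF.enorm (y w x') ≤ √d := fun x' w => hy w x'
  have h_logit : ∀ x' u, |attLogit K Q (fun w => y w x') i u| ≤ C := fun x' u => by
    simpa [C, sq_sqrt, mul_comm] using abs_attLogit_le K Q (hR x') i u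
  have h_scale := mul_sqrt_le_exp_two_mul (specNorm_nonneg (Kᵀ * Q)) d
  have h_dist_nonneg : 0 ≤ Δ + 1 / n * Δsum := by
    have := sum_nonneg fun j (_ : j ∈ univ) => SensTF.enorm_nonneg (y j x - y j (flip x q))
    have := SensTF.enorm_nonneg (y i x - y i (flip x q))
    positivity
  calc _ ≤ 2 * exp (2 * C) / n * ∑ u, |attLogit K Q (fun w => y w x) i u -
          attLogit K Q (fun w => y w (flip x q)) i u| := by
        simpa only [attWeight, Fintype.card_fin] using
          sum_abs_softmax_sub_le (h_logit x) (h_logit (flip x q))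
    _ ≤ 2 * exp (2 * C) / n * (specNorm (Kᵀ * Q) * √d * (n * Δ + Δsum)) := by
        gcongr
        exact sum_abs_attLogit_sub_le K Q (hR x) (hR (flip x q)) i
    _ = 2 * exp (2 * C) * (specNorm (Kᵀ * Q) * √d) * (Δ + 1 / n * Δsum) := by
        field_simp
    _ ≤ 2 * exp (2 * C) * exp (2 * C) * (Δ + 1 / n * Δsum) := by
        gcongr
    _ = _ := by
        rw [mul_assoc 2, ← exp_add]
        ring_nf
end
end

section
/- Let n ≥ 2, and for x ∈ {0,1}^n define logits a_j(x) = log n if x_j = 1 and a_j(x) = −log n if x_j = 0, and softmax weights â_j(x) = exp(a_j(x)) / Σ_{w=1}^n exp(a_w(x)). Then at x = 0^n (the all-zeros string): Σ_{q=1}^n Σ_{j=1}^n |â_j(x) − â_j(x^{⊕q})| ≥ n − 2. In particular, no bound of the form O(log n) on this double sum can hold pointwise for every input. -/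
open scoped BigOperators

noncomputable section

namespace SensTF

/-- The OR-style logits: `a_j(x) = log n` if `x_j = 1`, and `−log n` if `x_j = 0`. -/
def orLogit (n : ℕ) (x : Fin n → Bool) (j : Fin n) : ℝ :=
  if x j then Real.log n else -Real.log n

/-- Softmax weights of the OR-style logits. -/
def orWeight (n : ℕ) (x : Fin n → Bool) (j : Fin n) : ℝ :=
  Real.exp (orLogit n x j) / ∑ w : Fin n, Real.exp (orLogit n x w)

end SensTF

open SensTF

/-- no pointwise `O(log n)` bound on the total influence of attention.
For the OR-style softmax weights, at the all-zeros string `0ⁿ` (`n ≥ 2`),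
`∑_q ∑_j |â_j(0ⁿ) − â_j((0ⁿ)^{⊕q})| ≥ n − 2`. -/
theorem statement18 (n : ℕ) (hn : 2 ≤ n) :
    (n : ℝ) - 2 ≤
      ∑ q : Fin n, ∑ j : Fin n,
        |orWeight n (fun _ => false) j -
          orWeight n (flip (fun _ => false) q) j| := by
  have hn' : (2:ℝ) ≤ (n:ℝ) := by exact_mod_cast hn
  have npos : (0:ℝ) < n := by linarith
  have hexp1 : Real.exp (Real.log n) = n := Real.exp_log npos
  have hexp2 : Real.exp (-Real.log n) = (n:ℝ)⁻¹ := by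
    rw [Real.exp_neg, hexp1]
  -- the all-zeros softmax sum is 1
  have hL0 : ∀ j : Fin n, orLogit n (fun _ => false) j = -Real.log n := by
    intro j; simp [orLogit]
  have hS0 : ∑ w : Fin n, Real.exp (orLogit n (fun _ => false) w) = 1 := by
    simp only [hL0, hexp2, Finset.sum_const, Finset.card_univ, Fintype.card_fin,
      nsmul_eq_mul]
    field_simp
  have hW0 : ∀ j : Fin n, orWeight n (fun _ => false) j = (n:ℝ)⁻¹ := by
    intro j
    rw [orWeight, hS0, hL0, hexp2, div_one]
  -- flipped logits
  have hLf : ∀ q j : Fin n, orLogit n (flip (fun _ => false) q) j =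
      if j = q then Real.log n else -Real.log n := by
    intro q j
    by_cases h : j = q
    · subst h; simp [orLogit, SensTF.flip]
    · simp [orLogit, SensTF.flip, Function.update_of_ne h, h]
  have hSf : ∀ q : Fin n, ∑ w : Fin n, Real.exp (orLogit n (flip (fun _ => false) q) w)
      = (n:ℝ) + ((n:ℝ) - 1) * (n:ℝ)⁻¹ := by
    intro q
    rw [← Finset.add_sum_erase _ _ (Finset.mem_univ q)]
    have h1 : Real.exp (orLogit n (flip (fun _ => false) q) q) = n := by
      rw [hLf q q, if_pos rfl, hexp1]
    rw [h1]
    congr 1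
    have h2 : ∀ w ∈ Finset.univ.erase q,
        Real.exp (orLogit n (flip (fun _ => false) q) w) = (n:ℝ)⁻¹ := by
      intro w hw
      rw [hLf q w, if_neg (Finset.ne_of_mem_erase hw), hexp2]
    rw [Finset.sum_congr rfl h2, Finset.sum_const,
      Finset.card_erase_of_mem (Finset.mem_univ q), Finset.card_univ,
      Fintype.card_fin, nsmul_eq_mul]
    have : ((n - 1 : ℕ) : ℝ) = (n:ℝ) - 1 := by
      have : 1 ≤ n := by omega
      push_cast [this]; ring
    rw [this]
  have hWf : ∀ q : Fin n, orWeight n (flip (fun _ => false) q) q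
      = (n:ℝ) / ((n:ℝ) + ((n:ℝ) - 1) * (n:ℝ)⁻¹) := by
    intro q
    rw [orWeight, hSf q, hLf q q, if_pos rfl, hexp1]
  have hn0 : (n:ℝ) ≠ 0 := ne_of_gt npos
  have hE : (0:ℝ) < (n:ℝ)^2 + n - 1 := by nlinarith
  have hE0 : ((n:ℝ)^2 + n - 1) ≠ 0 := ne_of_gt hE
  -- key term lower bound
  have key : ∀ q : Fin n,
      (n:ℝ)⁻¹ * ((n:ℝ) - 2) ≤ ∑ j : Fin n,
        |orWeight n (fun _ => false) j - orWeight n (flip (fun _ => false) q) j| := by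
    intro q
    have h1 : |orWeight n (fun _ => false) q - orWeight n (flip (fun _ => false) q) q|
        ≤ ∑ j : Fin n, |orWeight n (fun _ => false) j -
            orWeight n (flip (fun _ => false) q) j| :=
      Finset.single_le_sum (f := fun j => |orWeight n (fun _ => false) j - orWeight n (SensTF.flip (fun _ => false) q) j|) (fun j _ => abs_nonneg _) (Finset.mem_univ q)
    refine le_trans ?_ h1
    rw [hW0 q, hWf q]
    have hDalt : (n:ℝ) + ((n:ℝ) - 1) * (n:ℝ)⁻¹ = ((n:ℝ)^2 + n - 1) / n := by
      field_simp; ring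
    have hfrac : (n:ℝ) / ((n:ℝ) + ((n:ℝ) - 1) * (n:ℝ)⁻¹)
        = (n:ℝ)^2 / ((n:ℝ)^2 + n - 1) := by
      rw [hDalt, div_div_eq_mul_div]; ring_nf
    rw [hfrac]
    have hge : (n:ℝ)⁻¹ ≤ (n:ℝ)^2 / ((n:ℝ)^2 + n - 1) := by
      rw [inv_eq_one_div, div_le_div_iff₀ npos hE]
      nlinarith
    rw [abs_of_nonpos (by linarith), neg_sub, le_sub_iff_add_le]
    rw [le_div_iff₀ hE]
    have hinv : (n:ℝ)⁻¹ * n = 1 := inv_mul_cancel₀ hn0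
    have ht1 : (n:ℝ)⁻¹ ≤ 1 := by
      rw [inv_le_one_iff₀]; right; linarith
    have ht0 : (0:ℝ) ≤ (n:ℝ)⁻¹ := by positivity
    nlinarith [mul_le_mul_of_nonneg_right ht1 (le_of_lt hE), hinv, ht0,
      mul_nonneg ht0 (le_of_lt hE)]
  calc (n:ℝ) - 2 = ∑ _q : Fin n, (n:ℝ)⁻¹ * ((n:ℝ) - 2) := by
        rw [Finset.sum_const, Finset.card_univ, Fintype.card_fin, nsmul_eq_mul]
        field_simp
    _ ≤ _ := Finset.sum_le_sum (fun q _ => key q)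
end
end
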